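/- Let b > 0 and let f : (0,b) → ℝ be such that f and f' are locally absolutely continuous on (0,b) and f(x) ≠ 0 for all x ∈ (0,b). Fix x₀ ∈ (0,b) and define η_±(x) = 2^{-1/2} f(x) exp(± ∫_x^{x₀} f(x')^{-2} dx'). Then η₊ and η₋ are solutions of -ψ''(x) + [f''(x)/f(x) + 1/f(x)⁴] ψ(x) = 0 on (0,b), and their Wronskian satisfies W(η₊, η₋)(x) = η₊(x)η₋'(x) - η₊'(x)η₋(x) = 1 for all x ∈ (0,b). -/

import Mathlib

open MeasureTheory Set intervalIntegral

/-- `η₊(x) = 2^{-1/2} f(x) exp(∫_x^{x₀} f⁻²)`. -/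
noncomputable def etaPlus (f : ℝ → ℝ) (x₀ x : ℝ) : ℝ :=
  (2 : ℝ) ^ (-(1 / 2 : ℝ)) * f x * Real.exp (∫ t in x..x₀, (f t ^ 2)⁻¹)

/-- `η₋(x) = 2^{-1/2} f(x) exp(-∫_x^{x₀} f⁻²)`. -/
noncomputable def etaMinus (f : ℝ → ℝ) (x₀ x : ℝ) : ℝ :=
  (2 : ℝ) ^ (-(1 / 2 : ℝ)) * f x * Real.exp (-∫ t in x..x₀, (f t ^ 2)⁻¹)

/-!
With `g(x) = ∫_x^{x₀} f⁻²` we have `g' = -f⁻²`, and for `s = ±1` the function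
`ψ = c f e^{s g}` satisfies `ψ' = c e^{s g} (f' - s/f)`. Differentiating once more, the two
cross terms `∓ f'/f²` cancel and `s² = 1` turns the remaining term into `1/f³`, so
`ψ'' = c e^{s g} (f'' + f⁻³) = (f''/f + f⁻⁴) ψ`. The Wronskian of the `s` and `t` solutions
is `c² e^{(s+t) g} (s - t)`, which equals `1` for `s = 1`, `t = -1` and `c = 2^{-1/2}`.
-/

theorem hasDerivAt_integral_left_of_continuousOn {φ : ℝ → ℝ} {U : Set ℝ} (hU : IsOpen U)
    (hUc : U.OrdConnected) (hφ : ContinuousOn φ U) {a x : ℝ} (ha : a ∈ U) (hx : x ∈ U) :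
    HasDerivAt (fun y => ∫ t in y..a, φ t) (-φ x) x :=
  integral_hasDerivAt_left (hφ.mono (hUc.uIcc_subset hx ha)).intervalIntegrable
    (hφ.stronglyMeasurableAtFilter hU x hx) (hφ.continuousAt (hU.mem_nhds hx))

section MulExp

variable {f g : ℝ → ℝ} {x : ℝ}

theorem HasDerivAt.mul_exp_mul {f' : ℝ} (s c : ℝ) (hf : HasDerivAt f f' x)
    (hg : HasDerivAt g (-(f x ^ 2)⁻¹) x) (hfx : f x ≠ 0) :
    HasDerivAt (fun y => c * f y * Real.exp (s * g y))
      (c * Real.exp (s * g x) * (f' - s / f x)) x := by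
  refine ((hf.const_mul c).mul (hg.const_mul s).exp).congr_deriv ?_
  field_simp
  ring

theorem hasDerivAt_deriv_mul_exp_mul {U : Set ℝ} (hU : IsOpen U) {s : ℝ} (c : ℝ)
    (hs : s ^ 2 = 1) (hf : ∀ y ∈ U, DifferentiableAt ℝ f y)
    (hf' : DifferentiableAt ℝ (deriv f) x) (hg : ∀ y ∈ U, HasDerivAt g (-(f y ^ 2)⁻¹) y)
    (hfne : ∀ y ∈ U, f y ≠ 0) (hx : x ∈ U) :
    HasDerivAt (deriv fun y => c * f y * Real.exp (s * g y))
      ((deriv (deriv f) x / f x + (f x ^ 4)⁻¹) * (c * f x * Real.exp (s * g x))) x := by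
  have hderiv : deriv (fun y => c * f y * Real.exp (s * g y)) =ᶠ[nhds x]
      fun y => c * Real.exp (s * g y) * (deriv f y - s / f y) := by
    filter_upwards [hU.mem_nhds hx] with y hy
    exact ((hf y hy).hasDerivAt.mul_exp_mul s c (hg y hy) (hfne y hy)).deriv
  refine HasDerivAt.congr_of_eventuallyEq ?_ hderiv
  have hfx := hfne x hx
  have hquot := (hasDerivAt_const x s).fun_div (hf x hx).hasDerivAt hfx
  refine ((((hg x hx).const_mul s).exp.const_mul c).mul
    (hf'.hasDerivAt.fun_sub hquot)).congr_deriv ?_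
  field_simp
  linear_combination c * hs

theorem wronskian_mul_exp_mul (s t c : ℝ) (hf : DifferentiableAt ℝ f x)
    (hg : HasDerivAt g (-(f x ^ 2)⁻¹) x) (hfx : f x ≠ 0) :
    c * f x * Real.exp (s * g x) * deriv (fun y => c * f y * Real.exp (t * g y)) x -
        deriv (fun y => c * f y * Real.exp (s * g y)) x * (c * f x * Real.exp (t * g x)) =
      c ^ 2 * Real.exp ((s + t) * g x) * (s - t) := by
  rw [(hf.hasDerivAt.mul_exp_mul t c hg hfx).deriv, (hf.hasDerivAt.mul_exp_mul s c hg hfx).deriv,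
    add_mul, Real.exp_add]
  field_simp
  ring

end MulExp

theorem rpow_neg_one_half_sq {a : ℝ} (ha : 0 ≤ a) : (a ^ (-(1 / 2 : ℝ))) ^ 2 = a⁻¹ := by
  rw [← Real.rpow_natCast, ← Real.rpow_mul ha]
  norm_num [Real.rpow_neg_one]

theorem eta_fundamental_system_general (b x₀ : ℝ) (hx₀ : x₀ ∈ Ioo 0 b)
    (f : ℝ → ℝ)
    (hf : ∀ x ∈ Ioo 0 b, DifferentiableAt ℝ f x)
    (hf' : ∀ x ∈ Ioo 0 b, DifferentiableAt ℝ (deriv f) x)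
    (hfne : ∀ x ∈ Ioo 0 b, f x ≠ 0) :
    (∀ x ∈ Ioo 0 b,
      -deriv (deriv (etaPlus f x₀)) x +
        (deriv (deriv f) x / f x + (f x ^ 4)⁻¹) * etaPlus f x₀ x = 0) ∧
    (∀ x ∈ Ioo 0 b,
      -deriv (deriv (etaMinus f x₀)) x +
        (deriv (deriv f) x / f x + (f x ^ 4)⁻¹) * etaMinus f x₀ x = 0) ∧
    (∀ x ∈ Ioo 0 b,
      etaPlus f x₀ x * deriv (etaMinus f x₀) x -
        deriv (etaPlus f x₀) x * etaMinus f x₀ x = 1) := by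
  set c : ℝ := (2 : ℝ) ^ (-(1 / 2 : ℝ))
  set g : ℝ → ℝ := fun x => ∫ t in x..x₀, (f t ^ 2)⁻¹
  have hg : ∀ x ∈ Ioo 0 b, HasDerivAt g (-(f x ^ 2)⁻¹) x := fun x hx =>
    hasDerivAt_integral_left_of_continuousOn isOpen_Ioo ordConnected_Ioo
      (fun t ht => (((hf t ht).continuousAt.pow 2).inv₀
        (pow_ne_zero 2 (hfne t ht))).continuousWithinAt) hx₀ hx
  have hplus : etaPlus f x₀ = fun y => c * f y * Real.exp (1 * g y) := by
    funext y; simp [etaPlus, c, g]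
  have hminus : etaMinus f x₀ = fun y => c * f y * Real.exp (-1 * g y) := by
    funext y; simp [etaMinus, c, g]
  have hode : ∀ s : ℝ, s ^ 2 = 1 → ∀ x ∈ Ioo 0 b,
      -deriv (deriv fun y => c * f y * Real.exp (s * g y)) x +
        (deriv (deriv f) x / f x + (f x ^ 4)⁻¹) * (c * f x * Real.exp (s * g x)) = 0 :=
    fun s hs x hx => by
      rw [(hasDerivAt_deriv_mul_exp_mul isOpen_Ioo c hs hf (hf' x hx) hg hfne hx).deriv]
      ring
  refine ⟨hplus ▸ hode 1 (one_pow 2), hminus ▸ hode (-1) (by norm_num), fun x hx => ?_⟩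
  rw [hplus, hminus, wronskian_mul_exp_mul 1 (-1) c (hf x hx) (hg x hx) (hfne x hx),
    rpow_neg_one_half_sq zero_le_two]
  norm_num

/-- Lemma 4.13(i): `η₊`, `η₋` solve `-ψ'' + [f''/f + f⁻⁴]ψ = 0` on `(0,b)` and
`W(η₊,η₋) = 1`. -/
theorem eta_fundamental_system (b x₀ : ℝ) (hb : 0 < b) (hx₀ : x₀ ∈ Ioo 0 b)
    (f : ℝ → ℝ)
    (hf : ∀ x ∈ Ioo 0 b, DifferentiableAt ℝ f x)
    (hf' : ∀ x ∈ Ioo 0 b, DifferentiableAt ℝ (deriv f) x)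
    (hfne : ∀ x ∈ Ioo 0 b, f x ≠ 0) :
    (∀ x ∈ Ioo 0 b,
      -deriv (deriv (etaPlus f x₀)) x +
        (deriv (deriv f) x / f x + (f x ^ 4)⁻¹) * etaPlus f x₀ x = 0) ∧
    (∀ x ∈ Ioo 0 b,
      -deriv (deriv (etaMinus f x₀)) x +
        (deriv (deriv f) x / f x + (f x ^ 4)⁻¹) * etaMinus f x₀ x = 0) ∧
    (∀ x ∈ Ioo 0 b,
      etaPlus f x₀ x * deriv (etaMinus f x₀) x -
        deriv (etaPlus f x₀) x * etaMinus f x₀ x = 1) :=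
  eta_fundamental_system_general b x₀ hx₀ f hf hf' hfne
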